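/- arXiv:1406.6623 — 3 statements merged into one kernel-verified Lean document; each statement's English description precedes it below -/
import Mathlib

section
/- Topological conformal dimension is monotone under inclusion: if X is a subset of a metric space Y (with the subspace metric), then dim_tC X ≤ dim_tC Y. -/
open Metric Set Topology
open scoped ENNReal NNReal

noncomputable section

/-- Hausdorff dimension of a set, with the convention that the empty set has dimension `-1`. -/
def hdim {X : Type*} [EMetricSpace X] (s : Set X) : EReal :=
  open scoped Classical in
  if s.Nonempty then ((dimH s : ℝ≥0∞) : EReal) else -1

/-- Hausdorff dimension of a metric space. -/
def hdimSpace (X : Type*) [EMetricSpace X] : EReal :=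
  hdim (Set.univ : Set X)

/-- A quasisymmetric embedding between metric spaces: a topological embedding `f` together with
a homeomorphism `η` of `[0,∞)` such that `d(x,a) ≤ t·d(x,b)` implies
`d(f x, f a) ≤ η t · d(f x, f b)`. -/
def IsQuasisymmetric {X Y : Type*} [MetricSpace X] [MetricSpace Y] (f : X → Y) : Prop :=
  Topology.IsEmbedding f ∧ ∃ η : ℝ≥0 ≃ₜ ℝ≥0, ∀ (x a b : X) (t : ℝ≥0), 0 < t →
    dist x a ≤ (t : ℝ) * dist x b → dist (f x) (f a) ≤ (η t : ℝ) * dist (f x) (f b)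

/-- Conformal dimension: infimum of Hausdorff dimensions of quasisymmetric images. -/
def conformalDim (X : Type u) [MetricSpace X] : EReal :=
  sInf { c : EReal | ∃ (Y : Type u) (_ : MetricSpace Y) (f : X → Y),
    IsQuasisymmetric f ∧ c = hdim (Set.range f) }

/-- Topological conformal dimension. -/
def tcDim (X : Type u) [MetricSpace X] : EReal :=
  sInf { c : EReal | ∃ 𝒰 : Set (Set X), TopologicalSpace.IsTopologicalBasis 𝒰 ∧
    ∀ U ∈ 𝒰, conformalDim ↥(frontier U) ≤ c - 1 }

/-- Topological Hausdorff dimension. -/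
def thDim (X : Type*) [MetricSpace X] : EReal :=
  sInf { c : EReal | ∃ 𝒰 : Set (Set X), TopologicalSpace.IsTopologicalBasis 𝒰 ∧
    ∀ U ∈ 𝒰, hdim (frontier U) ≤ c - 1 }

end

lemma hdim_mono {X : Type*} [EMetricSpace X] {s t : Set X} (h : s ⊆ t) :
    hdim s ≤ hdim t := by
  classical
  unfold hdim
  split_ifs with hs ht ht
  · exact EReal.coe_ennreal_le_coe_ennreal_iff.mpr (dimH_mono h)
  · exact absurd (hs.mono h) ht
  · exact (EReal.coe_ennreal_nonneg _).trans' (by norm_num)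
  · exact le_rfl

lemma conformalDim_le_of_isometry {A B : Type u} [MetricSpace A] [MetricSpace B]
    {f : A → B} (hf : Isometry f) : conformalDim A ≤ conformalDim B := by
  refine le_sInf ?_
  rintro _ ⟨Z, _, g, ⟨hg, η, hη⟩, rfl⟩
  refine (sInf_le ?_).trans (hdim_mono (range_comp_subset_range f g))
  refine ⟨Z, ‹_›, g ∘ f, ⟨hg.comp hf.isEmbedding, η, fun x a b t ht h => ?_⟩, rfl⟩
  exact hη (f x) (f a) (f b) t ht (by simpa only [hf.dist_eq] using h)

/-- A basis of `Y` pulls back to a basis of `X`, and the frontier of each pulled-back set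
embeds isometrically into the frontier of the original one. -/
lemma tcDim_le_of_isometry {X Y : Type u} [MetricSpace X] [MetricSpace Y]
    {f : X → Y} (hf : Isometry f) : tcDim X ≤ tcDim Y := by
  refine le_sInf ?_
  rintro c ⟨𝒰, h𝒰, hc⟩
  refine sInf_le ⟨preimage f '' 𝒰, h𝒰.isInducing hf.isEmbedding.isInducing, ?_⟩
  rintro _ ⟨U, hU, rfl⟩
  have hsub : frontier (f ⁻¹' U) ⊆ f ⁻¹' frontier U := hf.continuous.frontier_preimage_subset U
  have hiso : Isometry fun x : frontier (f ⁻¹' U) => (⟨f x, hsub x.2⟩ : frontier U) :=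
    fun x y => hf x y
  exact (conformalDim_le_of_isometry hiso).trans (hc U hU)

/-- Monotonicity under inclusion: if `X ⊆ Y` then `dim_tC X ≤ dim_tC Y`. -/
theorem stmt4 {Y : Type u} [MetricSpace Y] (X : Set Y) : tcDim ↥X ≤ tcDim Y :=
  tcDim_le_of_isometry isometry_subtype_coe
end

section
/- With the Euclidean metric, dim_tC ℚ = 0, dim_tC (ℝ \ ℚ) = 0, and dim_tC ℝ = 1; hence dim_tC ℝ = 1 > 0 = max{dim_tC ℚ, dim_tC (ℝ \ ℚ)}, so topological conformal dimension is not finitely stable for non-closed sets. -/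
open Metric Set Topology
open scoped ENNReal NNReal

/-!
In a subspace of `ℝ` with dense complement, intervals with endpoints outside the subspace are
clopen, so they form a basis of sets with empty frontier, of conformal dimension `-1`; this bounds
`dim_tC` of `ℚ` and of the irrationals by `0`. In `ℝ` the intervals have two-point frontiers, of
conformal dimension `0`, so `dim_tC ℝ ≤ 1`; conversely, by connectedness a basic open set that is
neither empty nor everything has nonempty frontier, of conformal dimension at least `0`.
-/

open TopologicalSpace

lemma neg_one_le_hdim {X : Type*} [EMetricSpace X] (s : Set X) : (-1 : EReal) ≤ hdim s := by
  unfold hdim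
  split_ifs
  · exact (by norm_num : (-1 : EReal) ≤ 0).trans (EReal.coe_ennreal_nonneg _)
  · exact le_rfl

lemma hdim_nonpos_of_countable {X : Type*} [EMetricSpace X] {s : Set X} (hs : s.Countable) :
    hdim s ≤ 0 := by
  unfold hdim
  split_ifs
  · simp [hs.dimH_zero]
  · norm_num

lemma isQuasisymmetric_id (X : Type*) [MetricSpace X] : IsQuasisymmetric (id : X → X) :=
  ⟨IsEmbedding.id, Homeomorph.refl _, fun _ _ _ _ _ h => h⟩

section conformalDim

variable (X : Type u) [MetricSpace X]

lemma conformalDim_le_hdim_univ : conformalDim X ≤ hdim (univ : Set X) :=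
  sInf_le ⟨X, _, id, isQuasisymmetric_id X, by rw [range_id]⟩

lemma neg_one_le_conformalDim : -1 ≤ conformalDim X :=
  le_sInf fun _ ⟨_, _, _, _, hc⟩ => hc ▸ neg_one_le_hdim _

lemma conformalDim_nonneg [Nonempty X] : 0 ≤ conformalDim X := by
  refine le_sInf fun _ ⟨_, _, f, _, hc⟩ => ?_
  rw [hc, hdim, if_pos (range_nonempty f)]
  exact EReal.coe_ennreal_nonneg _

lemma conformalDim_of_isEmpty [IsEmpty X] : conformalDim X = -1 := by
  refine le_antisymm ((conformalDim_le_hdim_univ X).trans ?_) (neg_one_le_conformalDim X)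
  rw [hdim, if_neg (by simp [univ_eq_empty_iff.2 ‹IsEmpty X›])]

lemma conformalDim_nonpos_of_countable [Countable X] : conformalDim X ≤ 0 :=
  (conformalDim_le_hdim_univ X).trans (hdim_nonpos_of_countable countable_univ)

end conformalDim

lemma EReal.le_sub_one_iff_add_one_le {a c : EReal} : a ≤ c - 1 ↔ a + 1 ≤ c :=
  EReal.le_sub_iff_add_le (.inl (EReal.coe_ne_bot 1)) (.inl (EReal.coe_ne_top 1))

section tcDim

variable {X : Type u} [MetricSpace X]

lemma tcDim_le_of_isTopologicalBasis {𝒰 : Set (Set X)} (h𝒰 : IsTopologicalBasis 𝒰) {c : EReal}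
    (hc : ∀ U ∈ 𝒰, conformalDim (frontier U) ≤ c - 1) : tcDim X ≤ c :=
  sInf_le ⟨𝒰, h𝒰, hc⟩

lemma le_tcDim {c : EReal}
    (hc : ∀ 𝒰 : Set (Set X), IsTopologicalBasis 𝒰 → ∃ U ∈ 𝒰, c ≤ conformalDim (frontier U) + 1) :
    c ≤ tcDim X := by
  refine le_sInf fun d ⟨𝒰, h𝒰, hd⟩ => ?_
  obtain ⟨U, hU, hcU⟩ := hc 𝒰 h𝒰
  exact hcU.trans (EReal.le_sub_one_iff_add_one_le.1 (hd U hU))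

lemma tcDim_nonneg [Nonempty X] : 0 ≤ tcDim X := by
  refine le_tcDim fun 𝒰 h𝒰 => ?_
  obtain ⟨x⟩ := ‹Nonempty X›
  obtain ⟨U, hU, -⟩ := h𝒰.exists_subset_of_mem_open (mem_univ x) isOpen_univ
  refine ⟨U, hU, ?_⟩
  calc (0 : EReal) = -1 + 1 := by
        rw [← EReal.coe_one, ← EReal.coe_neg, ← EReal.coe_add]; norm_num
    _ ≤ conformalDim (frontier U) + 1 := by gcongr; exact neg_one_le_conformalDim _

lemma tcDim_nonpos_of_isTopologicalBasis_isClopen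
    (h : IsTopologicalBasis {U : Set X | IsClopen U}) : tcDim X ≤ 0 := by
  refine tcDim_le_of_isTopologicalBasis h fun U hU => ?_
  have : IsEmpty (frontier U) := isEmpty_coe_sort.2 (isClopen_iff_frontier_eq_empty.1 hU)
  rw [conformalDim_of_isEmpty]
  simp

lemma one_le_tcDim [PreconnectedSpace X] [Nontrivial X] : 1 ≤ tcDim X := by
  refine le_tcDim fun 𝒰 h𝒰 => ?_
  obtain ⟨x, y, hxy⟩ := exists_pair_ne X
  obtain ⟨U, hU, hxU, hUy⟩ :=
    h𝒰.exists_subset_of_mem_open (mem_ball_self (x := x) (dist_pos.2 hxy)) isOpen_ball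
  have hfrontier : (frontier U).Nonempty := by
    rw [nonempty_iff_ne_empty, ne_eq, ← isClopen_iff_frontier_eq_empty, isClopen_iff]
    rintro (rfl | rfl)
    · exact hxU
    · exact (lt_irrefl _) (mem_ball'.1 (hUy (mem_univ y)))
  have := hfrontier.to_subtype
  refine ⟨U, hU, ?_⟩
  calc (1 : EReal) = 0 + 1 := by norm_num
    _ ≤ conformalDim (frontier U) + 1 := by gcongr; exact conformalDim_nonneg _

end tcDim

lemma isTopologicalBasis_isClopen_of_dense_compl {s : Set ℝ} (hs : Dense sᶜ) :
    IsTopologicalBasis {U : Set s | IsClopen U} := by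
  refine isTopologicalBasis_of_isOpen_of_nhds (fun U hU => hU.isOpen) fun x u hxu hu => ?_
  obtain ⟨t, ht, rfl⟩ := isOpen_induced_iff.1 hu
  obtain ⟨ε, hε, hball⟩ := Metric.isOpen_iff.1 ht x hxu
  rw [Real.ball_eq_Ioo] at hball
  obtain ⟨a, has, hax, hxa⟩ := hs.exists_between (sub_lt_self x.1 hε)
  obtain ⟨b, hbs, hxb, hbx⟩ := hs.exists_between (lt_add_of_pos_right x.1 hε)
  have hIoo_eq_Icc : ((↑) ⁻¹' Ioo a b : Set s) = (↑) ⁻¹' Icc a b := by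
    ext ⟨y, hy⟩
    simp only [mem_preimage, mem_Ioo, mem_Icc]
    constructor
    · exact fun h => ⟨h.1.le, h.2.le⟩
    · exact fun h => ⟨h.1.lt_of_ne (fun e => has (e ▸ hy)), h.2.lt_of_ne (fun e => hbs (e ▸ hy))⟩
  refine ⟨(↑) ⁻¹' Ioo a b, ⟨?_, isOpen_Ioo.preimage continuous_subtype_val⟩, ⟨hxa, hxb⟩,
    fun y hy => hball ⟨hax.trans hy.1, hy.2.trans hbx⟩⟩
  rw [hIoo_eq_Icc]
  exact isClosed_Icc.preimage continuous_subtype_val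

lemma tcDim_eq_zero_of_dense_compl {s : Set ℝ} (hs : Dense sᶜ) (hne : s.Nonempty) :
    tcDim s = 0 :=
  have := hne.to_subtype
  le_antisymm (tcDim_nonpos_of_isTopologicalBasis_isClopen
    (isTopologicalBasis_isClopen_of_dense_compl hs)) tcDim_nonneg

lemma tcDim_real_le_one : tcDim ℝ ≤ 1 := by
  refine tcDim_le_of_isTopologicalBasis Real.isTopologicalBasis_Ioo_rat fun U hU => ?_
  simp only [mem_iUnion, mem_singleton_iff] at hU
  obtain ⟨a, b, hab, rfl⟩ := hU
  have : Countable (frontier (Ioo (a : ℝ) b)) := by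
    rw [frontier_Ioo (by exact_mod_cast hab)]
    exact ((countable_singleton _).insert _).to_subtype
  exact (conformalDim_nonpos_of_countable _).trans
    (EReal.sub_self (EReal.coe_ne_top 1) (EReal.coe_ne_bot 1)).ge

/-- `dim_tC ℚ = 0`, `dim_tC (ℝ \\ ℚ) = 0` and `dim_tC ℝ = 1`; in particular topological
conformal dimension is not finitely stable for non-closed sets. -/
theorem stmt7 :
    tcDim ↥(Set.range ((↑) : ℚ → ℝ)) = 0 ∧
    tcDim ↥((Set.range ((↑) : ℚ → ℝ))ᶜ) = 0 ∧
    tcDim ℝ = 1 ∧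
    max (tcDim ↥(Set.range ((↑) : ℚ → ℝ))) (tcDim ↥((Set.range ((↑) : ℚ → ℝ))ᶜ)) < tcDim ℝ := by
  have hℚ : tcDim ↥(Set.range ((↑) : ℚ → ℝ)) = 0 :=
    tcDim_eq_zero_of_dense_compl dense_irrational ⟨0, 0, Rat.cast_zero⟩
  have hirrational : tcDim ↥((Set.range ((↑) : ℚ → ℝ))ᶜ) = 0 :=
    tcDim_eq_zero_of_dense_compl (by rw [compl_compl]; exact Rat.denseRange_cast)
      ⟨√2, irrational_sqrt_two⟩
  have hℝ : tcDim ℝ = 1 := le_antisymm tcDim_real_le_one one_le_tcDim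
  refine ⟨hℚ, hirrational, hℝ, ?_⟩
  rw [hℚ, hirrational, hℝ, max_self]
  exact zero_lt_one
end

section
/- Let (X,d) be a metric space with dim_tH X ≥ 1 and let 0 < α < 1. If X^α = (X, d^α) denotes the snowflaked metric space obtained by replacing the metric d with d^α, then dim_tH (X^α) = (dim_tH X − 1)/α + 1. In particular, topological Hausdorff dimension is not a quasisymmetric invariant, as the identity map (X,d) → (X,d^α) is quasisymmetric. -/
open Metric Set Topology
open scoped ENNReal NNReal

/-!
A map with `d(f x, f y) = d(x, y)^α` is `α`-Hölder with a `1/α`-Hölder inverse, hence a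
homeomorphism multiplying the Hausdorff dimension of every set by `1/α`. Carrying a basis across it
turns an admissible bound `c` for `dim_tH` (all boundaries of dimension `≤ c - 1`) into the bound
`(c - 1)/α + 1`, and `c ↦ (c - 1)/α + 1` is an order isomorphism of `EReal`, so it commutes with the
infimum. The one exception is an empty boundary, whose dimension is `-1` rather than `0`; but
`dim_tH X ≥ 1` rules out bases of clopen sets, so every admissible `c` is `≥ 1`, and then
`-1 ≤ c - 1` holds before and after rescaling.
-/

open TopologicalSpace

lemma EReal.sub_one_nonneg_iff {c : EReal} : 0 ≤ c - 1 ↔ 1 ≤ c :=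
  EReal.sub_nonneg (.inr (EReal.coe_ne_top 1)) (.inr (EReal.coe_ne_bot 1))

noncomputable def boundaryRescale (β : ℝ) (c : EReal) : EReal := β * (c - 1) + 1

lemma boundaryRescale_sub_one (β : ℝ) (c : EReal) : boundaryRescale β c - 1 = β * (c - 1) := by
  rw [boundaryRescale, ← EReal.coe_one, EReal.add_sub_cancel_right]

lemma boundaryRescale_one (β : ℝ) : boundaryRescale β 1 = 1 := by
  simp [boundaryRescale, ← EReal.coe_one]

lemma boundaryRescale_mono {β : ℝ} (hβ : 0 ≤ β) : Monotone (boundaryRescale β) := fun _ _ h =>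
  add_le_add_left (mul_le_mul_of_nonneg_left (EReal.sub_le_sub h le_rfl) (EReal.coe_nonneg.2 hβ)) 1

lemma boundaryRescale_inv_boundaryRescale {β : ℝ} (hβ : β ≠ 0) (c : EReal) :
    boundaryRescale β⁻¹ (boundaryRescale β c) = c := by
  rw [boundaryRescale, boundaryRescale_sub_one, ← mul_assoc, ← EReal.coe_mul, inv_mul_cancel₀ hβ,
    EReal.coe_one, one_mul, ← EReal.coe_one, EReal.sub_add_cancel]

noncomputable def boundaryRescaleIso (β : ℝ) (hβ : 0 < β) : EReal ≃o EReal :=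
  Equiv.toOrderIso
    ⟨boundaryRescale β, boundaryRescale β⁻¹, boundaryRescale_inv_boundaryRescale hβ.ne',
      fun c => by simpa using boundaryRescale_inv_boundaryRescale (inv_ne_zero hβ.ne') c⟩
    (boundaryRescale_mono hβ.le) (boundaryRescale_mono (inv_pos.2 hβ).le)

lemma boundaryRescaleIso_apply {β : ℝ} (hβ : 0 < β) (c : EReal) :
    boundaryRescaleIso β hβ c = boundaryRescale β c :=
  rfl

section hdim

variable {X Y : Type*} [EMetricSpace X] [EMetricSpace Y] {s : Set X}

lemma hdim_empty : hdim (∅ : Set X) = -1 := by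
  simp [hdim]

lemma hdim_of_nonempty (hs : s.Nonempty) : hdim s = dimH s := by
  simp [hdim, hs]

lemma hdim_le_iff {b : EReal} (hb : 0 ≤ b) : hdim s ≤ b ↔ (dimH s : EReal) ≤ b := by
  rcases s.eq_empty_or_nonempty with rfl | hs
  · rw [hdim_empty, dimH_empty, EReal.coe_ennreal_zero]
    exact iff_of_true ((show (-1 : EReal) ≤ 0 by norm_num).trans hb) hb
  · rw [hdim_of_nonempty hs]

lemma eq_empty_of_hdim_le_sub_one {c : EReal} (hc : ¬ 1 ≤ c) (h : hdim s ≤ c - 1) : s = ∅ := by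
  by_contra hs
  have h0 : 0 ≤ c - 1 :=
    (EReal.coe_ennreal_nonneg _).trans ((hdim_of_nonempty (nonempty_iff_ne_empty.2 hs)).ge.trans h)
  exact hc (EReal.sub_one_nonneg_iff.1 h0)

lemma hdim_image_le_mul {f : X → Y} {β : ℝ} (hβ : 0 ≤ β) {b : EReal} (hb : 0 ≤ b)
    (hf : dimH (f '' s) ≤ ENNReal.ofReal β * dimH s) (h : hdim s ≤ b) :
    hdim (f '' s) ≤ β * b := by
  have hβ' : (0 : EReal) ≤ β := EReal.coe_nonneg.2 hβ
  rw [hdim_le_iff (mul_nonneg hβ' hb)]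
  rw [hdim_le_iff hb] at h
  calc (dimH (f '' s) : EReal) ≤ ((ENNReal.ofReal β * dimH s : ℝ≥0∞) : EReal) :=
        EReal.coe_ennreal_le_coe_ennreal_iff.2 hf
    _ = β * dimH s := by rw [EReal.coe_ennreal_mul, EReal.coe_ennreal_ofReal, max_eq_left hβ]
    _ ≤ β * b := mul_le_mul_of_nonneg_left h hβ'

end hdim

lemma Homeomorph.isTopologicalBasis_image {X Y : Type*} [TopologicalSpace X] [TopologicalSpace Y]
    (e : X ≃ₜ Y) {𝒰 : Set (Set X)} (h : IsTopologicalBasis 𝒰) :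
    IsTopologicalBasis ((e '' ·) '' 𝒰) := by
  have := h.induced e.symm
  rwa [e.preimage_symm, ← e.symm.isInducing.eq_induced] at this

section thDim

variable {X Y : Type*} [MetricSpace X] [MetricSpace Y]

lemma thDim_le_of_isTopologicalBasis {𝒰 : Set (Set X)} {c : EReal} (h𝒰 : IsTopologicalBasis 𝒰)
    (h : ∀ U ∈ 𝒰, hdim (frontier U) ≤ c - 1) : thDim X ≤ c :=
  sInf_le ⟨𝒰, h𝒰, h⟩

theorem thDim_le_boundaryRescale_of_dimH_image_le (e : X ≃ₜ Y) {β : ℝ} (hβ : 0 < β)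
    (he : ∀ s, dimH (e '' s) ≤ ENNReal.ofReal β * dimH s) (hY : 1 ≤ thDim Y) :
    thDim Y ≤ boundaryRescale β (thDim X) := by
  change thDim Y ≤ boundaryRescaleIso β hβ (sInf _)
  rw [OrderIso.map_sInf]
  refine le_iInf₂ fun c ⟨𝒰, h𝒰, hU⟩ => ?_
  have h𝒱 := e.isTopologicalBasis_image h𝒰
  by_cases hc : 1 ≤ c
  · refine thDim_le_of_isTopologicalBasis h𝒱 (forall_mem_image.2 fun U hU𝒰 => ?_)
    rw [← e.image_frontier, boundaryRescaleIso_apply, boundaryRescale_sub_one]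
    exact hdim_image_le_mul hβ.le (EReal.sub_one_nonneg_iff.2 hc) (he _) (hU U hU𝒰)
  · have hY0 : thDim Y ≤ 0 := by
      refine thDim_le_of_isTopologicalBasis h𝒱 (forall_mem_image.2 fun U hU𝒰 => ?_)
      rw [← e.image_frontier, eq_empty_of_hdim_le_sub_one hc (hU U hU𝒰), image_empty, hdim_empty]
      norm_num
    exact absurd (hY.trans hY0) (by norm_num)

theorem thDim_eq_boundaryRescale_of_dimH_image (e : X ≃ₜ Y) {β : ℝ} (hβ : 0 < β)
    (he : ∀ s, dimH (e '' s) = ENNReal.ofReal β * dimH s) (hX : 1 ≤ thDim X) :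
    thDim Y = boundaryRescale β (thDim X) := by
  have he_symm (t : Set Y) : dimH (e.symm '' t) = ENNReal.ofReal β⁻¹ * dimH t :=
    calc dimH (e.symm '' t) = ENNReal.ofReal β⁻¹ * (ENNReal.ofReal β * dimH (e.symm '' t)) := by
          rw [ENNReal.ofReal_inv_of_pos hβ,
            ENNReal.inv_mul_cancel_left (ENNReal.ofReal_pos.2 hβ).ne' ENNReal.ofReal_ne_top]
      _ = ENNReal.ofReal β⁻¹ * dimH t := by
          simp only [← he, image_image, e.apply_symm_apply, image_id']
  have hge : boundaryRescale β (thDim X) ≤ thDim Y :=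
    (boundaryRescaleIso β hβ).le_symm_apply.1
      (thDim_le_boundaryRescale_of_dimH_image_le e.symm (inv_pos.2 hβ) (fun t => (he_symm t).le) hX)
  have hY : 1 ≤ thDim Y :=
    (boundaryRescale_one β).ge.trans ((boundaryRescale_mono hβ.le hX).trans hge)
  exact le_antisymm (thDim_le_boundaryRescale_of_dimH_image_le e hβ (fun s => (he s).le) hY) hge

end thDim

section Snowflake

variable {X Y : Type*} [MetricSpace X] [MetricSpace Y] {α : ℝ}

lemma holderWith_of_dist_eq_rpow {f : X → Y} (hα : 0 < α)
    (hf : ∀ x y, dist (f x) (f y) = dist x y ^ α) : HolderWith 1 (Real.toNNReal α) f := by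
  intro x y
  rw [ENNReal.coe_one, one_mul, Real.coe_toNNReal _ hα.le, edist_dist, edist_dist, hf,
    ENNReal.ofReal_rpow_of_nonneg dist_nonneg hα.le]

lemma dimH_image_le_of_dist_eq_rpow {f : X → Y} (hα : 0 < α)
    (hf : ∀ x y, dist (f x) (f y) = dist x y ^ α) (s : Set X) :
    dimH (f '' s) ≤ ENNReal.ofReal α⁻¹ * dimH s := by
  rw [mul_comm, ENNReal.ofReal_inv_of_pos hα, ← div_eq_mul_inv]
  exact (holderWith_of_dist_eq_rpow hα hf).dimH_image_le (Real.toNNReal_pos.2 hα) s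

lemma Equiv.dist_symm_eq_rpow (e : X ≃ Y) (hα : 0 < α)
    (he : ∀ x y, dist (e x) (e y) = dist x y ^ α) (x y : Y) :
    dist (e.symm x) (e.symm y) = dist x y ^ α⁻¹ := by
  conv_rhs => rw [← e.apply_symm_apply x, ← e.apply_symm_apply y, he,
    ← Real.rpow_mul dist_nonneg, mul_inv_cancel₀ hα.ne', Real.rpow_one]

lemma Equiv.dimH_image_of_dist_eq_rpow (e : X ≃ Y) (hα : 0 < α)
    (he : ∀ x y, dist (e x) (e y) = dist x y ^ α) (s : Set X) :
    dimH (e '' s) = ENNReal.ofReal α⁻¹ * dimH s := by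
  refine le_antisymm (dimH_image_le_of_dist_eq_rpow hα he s) ?_
  have h := dimH_image_le_of_dist_eq_rpow (inv_pos.2 hα) (e.dist_symm_eq_rpow hα he) (e '' s)
  rw [e.symm_image_image, inv_inv] at h
  calc ENNReal.ofReal α⁻¹ * dimH s ≤ ENNReal.ofReal α⁻¹ * (ENNReal.ofReal α * dimH (e '' s)) :=
        mul_le_mul_right h _
    _ = dimH (e '' s) := by
      rw [ENNReal.ofReal_inv_of_pos hα,
        ENNReal.inv_mul_cancel_left (ENNReal.ofReal_pos.2 hα).ne' ENNReal.ofReal_ne_top]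

def Equiv.toHomeomorphOfDistEqRpow (e : X ≃ Y) (hα : 0 < α)
    (he : ∀ x y, dist (e x) (e y) = dist x y ^ α) : X ≃ₜ Y where
  toEquiv := e
  continuous_toFun := (holderWith_of_dist_eq_rpow hα he).continuous (Real.toNNReal_pos.2 hα)
  continuous_invFun := (holderWith_of_dist_eq_rpow (inv_pos.2 hα)
    (e.dist_symm_eq_rpow hα he)).continuous (Real.toNNReal_pos.2 (inv_pos.2 hα))

lemma Equiv.isQuasisymmetric_of_dist_eq_rpow (e : X ≃ Y) (hα : 0 < α)
    (he : ∀ x y, dist (e x) (e y) = dist x y ^ α) : IsQuasisymmetric e := by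
  refine ⟨(e.toHomeomorphOfDistEqRpow hα he).isEmbedding, (NNReal.orderIsoRpow α hα).toHomeomorph,
    fun x a b t _ hab => ?_⟩
  have hη : ((NNReal.orderIsoRpow α hα).toHomeomorph t : ℝ) = (t : ℝ) ^ α := rfl
  rw [he, he, hη, ← Real.mul_rpow t.coe_nonneg dist_nonneg]
  exact Real.rpow_le_rpow dist_nonneg hab hα.le

end Snowflake

theorem stmt18_general {X : Type u} (m m' : MetricSpace X) (α : ℝ) (hα0 : 0 < α)
    (hdist : ∀ x y : X, @dist X m'.toDist x y = (@dist X m.toDist x y) ^ α)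
    (h1 : (1 : EReal) ≤ @thDim X m) :
    @thDim X m' = ((α⁻¹ : ℝ) : EReal) * (@thDim X m - 1) + 1 ∧
    @IsQuasisymmetric X X m m' id :=
  ⟨@thDim_eq_boundaryRescale_of_dimH_image X X m m'
      (@Equiv.toHomeomorphOfDistEqRpow X X m m' α (Equiv.refl X) hα0 hdist) α⁻¹ (inv_pos.2 hα0)
      (@Equiv.dimH_image_of_dist_eq_rpow X X m m' α (Equiv.refl X) hα0 hdist) h1,
    @Equiv.isQuasisymmetric_of_dist_eq_rpow X X m m' α (Equiv.refl X) hα0 hdist⟩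

/-- Snowflaking the metric by `d ↦ d^α` transforms the topological Hausdorff dimension by
`dim_tH X^α = (dim_tH X - 1)/α + 1`; moreover the identity map `(X,d) → (X,d^α)` is
quasisymmetric, so `dim_tH` is not a quasisymmetric invariant. -/
theorem stmt18 {X : Type u} (m m' : MetricSpace X) (α : ℝ) (hα0 : 0 < α) (hα1 : α < 1)
    (hdist : ∀ x y : X, @dist X m'.toDist x y = (@dist X m.toDist x y) ^ α)
    (h1 : (1 : EReal) ≤ @thDim X m) :
    @thDim X m' = ((α⁻¹ : ℝ) : EReal) * (@thDim X m - 1) + 1 ∧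
    @IsQuasisymmetric X X m m' id :=
  stmt18_general m m' α hα0 hdist h1
end
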